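/- For all integers n, m ≥ 3, the super edge-magic deficiency of P_n + K̄_m satisfies μ_s(P_n + K̄_m) ≤ (n−1)(m−1) − 1. -/

import Mathlib

/-!
Label the path vertices by the `n` consecutive integers `⌊n/2⌋ + 1, …, ⌊n/2⌋ + n`, in the zig-zag
order that makes the path edge sums `⌊n/2⌋ + n + 2, …, ⌊n/2⌋ + 2n` consecutive, and the other
vertices by `1, 2n, 3n, …, mn`. The edges at the vertex labelled `1` or `jn` then have sums filling
a block of `n` consecutive integers, and these blocks together with the path edge sums tile an
interval. Edge sums that are distinct and consecutive make a vertex labeling onto `{1, …, p}`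
super edge-magic (label the edge `xy` by `k - f x - f y`), so it remains to give the
`nm - (n + m)` labels of `{1, …, nm}` that are not used to isolated vertices.
-/

open SimpleGraph

/-- A super edge-magic labeling of `G` with magic constant `k`: a bijection from
vertices and edges onto `{1, …, p+q}` sending vertices onto `{1, …, p}`, with
`f x + f (xy) + f y = k` for every edge `xy`. -/
def IsSEMWith {V : Type*} [Fintype V] (G : SimpleGraph V) (k : ℕ) : Prop :=
  ∃ (f : V → ℕ) (g : G.edgeSet → ℕ),
    Function.Injective (Sum.elim f g) ∧
    Set.range (Sum.elim f g) = Set.Icc 1 (Fintype.card V + G.edgeSet.ncard) ∧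
    Set.range f = Set.Icc 1 (Fintype.card V) ∧
    ∀ (x y : V) (h : G.Adj x y), f x + g ⟨s(x, y), G.mem_edgeSet.mpr h⟩ + f y = k

/-- `G` is super edge-magic. -/
def IsSEM {V : Type*} [Fintype V] (G : SimpleGraph V) : Prop :=
  ∃ k : ℕ, IsSEMWith G k

/-- The graph `G ∪ t K₁`: `G` together with `t` added isolated vertices. -/
def unionIsolated {V : Type*} (G : SimpleGraph V) (t : ℕ) : SimpleGraph (V ⊕ Fin t) :=
  G.map Function.Embedding.inl

/-- The super edge-magic deficiency `μₛ(G)`: the least `t` such that `G ∪ t K₁`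
is super edge-magic, or `⊤` if there is no such `t`. -/
noncomputable def semDeficiency {V : Type*} [Fintype V] (G : SimpleGraph V) : ℕ∞ :=
  sInf ((fun t : ℕ => (t : ℕ∞)) '' {t : ℕ | IsSEM (unionIsolated G t)})

/-- `H n`: the wheel `W_n` (hub `0`, rim `1, …, n`) minus the spoke `{0, 1}`. -/
def wheelMinusSpoke (n : ℕ) : SimpleGraph (Fin (n + 1)) :=
  SimpleGraph.fromRel (fun i j =>
    ((i : ℕ) = 0 ∧ 2 ≤ (j : ℕ)) ∨
    ((j : ℕ) = (i : ℕ) + 1 ∧ 1 ≤ (i : ℕ)) ∨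
    ((i : ℕ) = n ∧ (j : ℕ) = 1))

/-- The join `P_n + K̄_m`: a path `u_1 … u_n` plus `m` vertices joined to every `u_i`. -/
def pathJoin (n m : ℕ) : SimpleGraph (Fin n ⊕ Fin m) :=
  SimpleGraph.fromRel (fun a b =>
    (∃ i j : Fin n, a = Sum.inl i ∧ b = Sum.inl j ∧ (j : ℕ) = (i : ℕ) + 1) ∨
    (∃ (i : Fin n) (j : Fin m), a = Sum.inl i ∧ b = Sum.inr j))

/-- The join `K_{1,n} + K̄_m`: a star with center `Sum.inl 0` and leaves
`Sum.inl i`, `i ≠ 0`, plus `m` vertices joined to all star vertices. -/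
def starJoin (n m : ℕ) : SimpleGraph (Fin (n + 1) ⊕ Fin m) :=
  SimpleGraph.fromRel (fun a b =>
    (∃ i : Fin (n + 1), a = Sum.inl 0 ∧ b = Sum.inl i ∧ i ≠ 0) ∨
    (∃ (i : Fin (n + 1)) (j : Fin m), a = Sum.inl i ∧ b = Sum.inr j))

/-- The join `C_n + K̄_m`: a cycle `u_1 … u_n` plus `m` vertices joined to every `u_i`. -/
def cycleJoin (n m : ℕ) : SimpleGraph (Fin n ⊕ Fin m) :=
  SimpleGraph.fromRel (fun a b =>
    (∃ i j : Fin n, a = Sum.inl i ∧ b = Sum.inl j ∧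
      ((j : ℕ) = (i : ℕ) + 1 ∨ ((i : ℕ) = n - 1 ∧ (j : ℕ) = 0))) ∨
    (∃ (i : Fin n) (j : Fin m), a = Sum.inl i ∧ b = Sum.inr j))

/-- The join `G + K̄_m`: `G` plus `m` new vertices joined to every vertex of `G`. -/
def joinIsolated {V : Type*} (G : SimpleGraph V) (m : ℕ) : SimpleGraph (V ⊕ Fin m) :=
  SimpleGraph.fromRel (fun a b =>
    (∃ x y : V, a = Sum.inl x ∧ b = Sum.inl y ∧ G.Adj x y) ∨
    (∃ (x : V) (j : Fin m), a = Sum.inl x ∧ b = Sum.inr j))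

def edgeSum {V : Type*} (f : V → ℕ) : Sym2 V → ℕ :=
  Sym2.lift ⟨fun a b => f a + f b, fun _ _ => Nat.add_comm _ _⟩

@[simp] lemma edgeSum_mk {V : Type*} (f : V → ℕ) (a b : V) :
    edgeSum f s(a, b) = f a + f b := rfl

lemma edgeSum_map {V W : Type*} (f : W → ℕ) (φ : V → W) (e : Sym2 V) :
    edgeSum f (e.map φ) = edgeSum (f ∘ φ) e := by
  induction e using Sym2.ind with
  | _ a b => rfl

lemma injective_of_range_eq_Icc {V : Type*} [Fintype V] {f : V → ℕ}
    (hf : Set.range f = Set.Icc 1 (Fintype.card V)) : Function.Injective f := by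
  have himage : Finset.univ.image f = Finset.Icc 1 (Fintype.card V) := by
    rw [← Finset.coe_inj, Finset.coe_image, Finset.coe_univ, Set.image_univ, hf, Finset.coe_Icc]
  rw [← Set.injOn_univ, ← Finset.coe_univ]
  exact Finset.injOn_of_card_image_eq (by simp [himage])

theorem isSEMWith_of_bijOn_edgeSum {V : Type*} [Fintype V] {G : SimpleGraph V} {f : V → ℕ}
    {s r : ℕ} (hf : Set.range f = Set.Icc 1 (Fintype.card V))
    (hσ : Set.BijOn (edgeSum f) G.edgeSet (Set.Ico s r)) :
    IsSEMWith G (Fintype.card V + r) := by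
  set p := Fintype.card V
  have hfp (v : V) : f v ∈ Set.Icc 1 p := hf ▸ Set.mem_range_self v
  have hσsr (e : G.edgeSet) : edgeSum f e ∈ Set.Ico s r := hσ.mapsTo e.2
  have hq : G.edgeSet.ncard = r - s := by
    rw [← hσ.injOn.ncard_image, hσ.image_eq, ← Finset.coe_Ico,
      Set.ncard_coe_finset, Nat.card_Ico]
  have hg : Set.range (fun e : G.edgeSet => p + r - edgeSum f e) =
      Set.Icc (p + 1) (p + (r - s)) := by
    ext y
    constructor
    · rintro ⟨e, rfl⟩
      have := hσsr e
      simp only [Set.mem_Ico, Set.mem_Icc] at this ⊢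
      omega
    · intro hy
      simp only [Set.mem_Icc] at hy
      obtain ⟨e, he, hey⟩ :=
        hσ.surjOn (show p + r - y ∈ Set.Ico s r by simp only [Set.mem_Ico]; omega)
      exact ⟨⟨e, he⟩, by simp only [hey]; omega⟩
  refine ⟨f, fun e => p + r - edgeSum f e, ?_, ?_, hf, fun x y hxy => ?_⟩
  · refine (injective_of_range_eq_Icc hf).sumElim (fun e e' hee' => Subtype.ext ?_) ?_
    · have h := hσsr e
      have h' := hσsr e'
      simp only [Set.mem_Ico] at hee' h h'
      exact hσ.injOn e.2 e'.2 (by omega)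
    · intro v e hve
      have h := hfp v
      have h' := hσsr e
      simp only [Set.mem_Ico, Set.mem_Icc] at hve h h'
      omega
  · rw [Set.Sum.elim_range, hf, hg, hq]
    ext y
    simp only [Set.mem_union, Set.mem_Icc]
    omega
  · have h := hσ.mapsTo (G.mem_edgeSet.mpr hxy)
    simp only [edgeSum_mk, Set.mem_Ico] at h ⊢
    omega

lemma exists_range_sumElim_eq_Icc {V : Type*} [Fintype V] {f : V → ℕ} {N : ℕ}
    (hf : Function.Injective f) (hfN : ∀ v, f v ∈ Set.Icc 1 N) :
    ∃ h : Fin (N - Fintype.card V) → ℕ, Set.range (Sum.elim f h) = Set.Icc 1 N := by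
  have hsub : Finset.univ.image f ⊆ Finset.Icc 1 N := by
    simpa [Finset.subset_iff] using hfN
  set A := Finset.Icc 1 N \ Finset.univ.image f
  have hA : A.card = N - Fintype.card V := by
    rw [Finset.card_sdiff_of_subset hsub, Finset.card_image_of_injective _ hf, Nat.card_Icc,
      Finset.card_univ, Nat.add_sub_cancel]
  refine ⟨fun k => (A.equivFinOfCardEq hA).symm k, ?_⟩
  have hrange : Set.range (fun k => ((A.equivFinOfCardEq hA).symm k : ℕ)) = A := by
    ext y
    refine ⟨fun ⟨k, hk⟩ => hk ▸ ((A.equivFinOfCardEq hA).symm k).2, fun hy => ?_⟩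
    exact ⟨A.equivFinOfCardEq hA ⟨y, hy⟩, by simp⟩
  rw [Set.Sum.elim_range, hrange, ← Set.image_univ, ← Finset.coe_univ, ← Finset.coe_image,
    ← Finset.coe_union, Finset.union_sdiff_of_subset hsub, Finset.coe_Icc]

theorem isSEM_unionIsolated_of_bijOn_edgeSum {V : Type*} [Fintype V] {G : SimpleGraph V}
    {f : V → ℕ} {N s r : ℕ} (hf : Function.Injective f) (hfN : ∀ v, f v ∈ Set.Icc 1 N)
    (hσ : Set.BijOn (edgeSum f) G.edgeSet (Set.Ico s r)) :
    IsSEM (unionIsolated G (N - Fintype.card V)) := by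
  obtain ⟨h, hh⟩ := exists_range_sumElim_eq_Icc hf hfN
  have hcard : Fintype.card V ≤ N := by
    simpa using Finset.card_le_card_of_injOn f (s := Finset.univ) (t := Finset.Icc 1 N)
      (fun v _ => Finset.mem_coe.mpr (Finset.mem_Icc.mpr (hfN v))) hf.injOn
  have hcard' : Fintype.card (V ⊕ Fin (N - Fintype.card V)) = N := by
    simp only [Fintype.card_sum, Fintype.card_fin]
    omega
  have hh' : Set.range (Sum.elim f h) =
      Set.Icc 1 (Fintype.card (V ⊕ Fin (N - Fintype.card V))) := by
    rw [hh, hcard']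
  refine ⟨_, isSEMWith_of_bijOn_edgeSum (s := s) (r := r) hh' ?_⟩
  have hcomp : edgeSum (Sum.elim f h) ∘ Sym2.map Sum.inl = edgeSum f :=
    funext fun e => edgeSum_map _ _ e
  rw [unionIsolated, edgeSet_map]
  exact (Set.bijOn_comp_iff (Sym2.map.injective Sum.inl_injective).injOn).mp (hcomp ▸ hσ)

lemma semDeficiency_le {V : Type*} [Fintype V] {G : SimpleGraph V} {t : ℕ}
    (h : IsSEM (unionIsolated G t)) : semDeficiency G ≤ t :=
  sInf_le ⟨t, h, rfl⟩

lemma mem_edgeSet_pathJoin {n m : ℕ} {e : Sym2 (Fin n ⊕ Fin m)} :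
    e ∈ (pathJoin n m).edgeSet ↔
      (∃ i i' : Fin n, (i' : ℕ) = i + 1 ∧ e = s(Sum.inl i, Sum.inl i')) ∨
      ∃ (i : Fin n) (j : Fin m), e = s(Sum.inl i, Sum.inr j) := by
  induction e using Sym2.ind with
  | _ a b =>
    rw [mem_edgeSet, pathJoin, fromRel_adj]
    constructor
    · rintro ⟨-, (⟨i, i', rfl, rfl, h⟩ | ⟨i, j, rfl, rfl⟩) |
        (⟨i, i', rfl, rfl, h⟩ | ⟨i, j, rfl, rfl⟩)⟩
      · exact Or.inl ⟨i, i', h, rfl⟩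
      · exact Or.inr ⟨i, j, rfl⟩
      · exact Or.inl ⟨i, i', h, Sym2.eq_swap⟩
      · exact Or.inr ⟨i, j, Sym2.eq_swap⟩
    · rintro (⟨i, i', h, he⟩ | ⟨i, j, he⟩) <;>
        rcases Sym2.eq_iff.mp he with ⟨rfl, rfl⟩ | ⟨rfl, rfl⟩
      · exact ⟨by simp [Fin.ext_iff, h], Or.inl (Or.inl ⟨i, i', rfl, rfl, h⟩)⟩
      · exact ⟨by simp [Fin.ext_iff, h], Or.inr (Or.inl ⟨i, i', rfl, rfl, h⟩)⟩
      · exact ⟨by simp, Or.inl (Or.inr ⟨i, j, rfl, rfl⟩)⟩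
      · exact ⟨by simp, Or.inr (Or.inr ⟨i, j, rfl, rfl⟩)⟩

-- Vertices are indexed from `0`: `pathLabel n i` and `joinLabel n j` are the paper's `f(u_{i+1})`
-- and `f(v_{j+1})`.
def pathLabel (n i : ℕ) : ℕ := if i % 2 = 0 then n / 2 + 1 + i / 2 else n + (i + 1) / 2

def pathLabelInv (n w : ℕ) : ℕ := if w ≤ n then 2 * (w - (n / 2 + 1)) else 2 * (w - n) - 1

lemma pathLabel_bijOn (n : ℕ) :
    Set.BijOn (pathLabel n) (Set.Iio n) (Set.Icc (n / 2 + 1) (n / 2 + n)) := by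
  refine Set.InvOn.bijOn (f' := pathLabelInv n) ⟨fun i hi => ?_, fun w hw => ?_⟩
    (fun i hi => ?_) (fun w hw => ?_)
  all_goals
    simp only [Set.mem_Iio, Set.mem_Icc, pathLabel, pathLabelInv] at *
    split_ifs <;> omega

lemma pathLabel_add_pathLabel_succ {n i : ℕ} (hi : i + 1 < n) :
    pathLabel n i + pathLabel n (i + 1) = n / 2 + n + 2 + i := by
  unfold pathLabel; split_ifs <;> omega

def joinLabel (n j : ℕ) : ℕ := if j = 0 then 1 else (j + 1) * n

lemma joinLabel_eq_one_or_le (n j : ℕ) : joinLabel n j = 1 ∨ 2 * n ≤ joinLabel n j := by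
  unfold joinLabel
  split_ifs with hj
  · exact Or.inl rfl
  · exact Or.inr (Nat.mul_le_mul_right n (by omega))

lemma joinLabel_add_le_of_lt {n j₁ j₂ : ℕ} (hn : 0 < n) (hj : j₁ < j₂) :
    joinLabel n j₁ + n ≤ joinLabel n j₂ := by
  have hle : (j₁ + 2) * n ≤ (j₂ + 1) * n := Nat.mul_le_mul_right n (by omega)
  have h2n : 2 * n ≤ (j₂ + 1) * n := Nat.mul_le_mul_right n (by omega)
  unfold joinLabel
  split_ifs <;> simp only [add_mul] at hle ⊢ <;> omega

lemma joinLabel_le {n m j : ℕ} (hn : 0 < n) (hj : j < m) : joinLabel n j ≤ m * n := by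
  unfold joinLabel
  split_ifs
  · exact Nat.one_le_iff_ne_zero.mpr (Nat.mul_ne_zero (by omega) (by omega))
  · exact Nat.mul_le_mul_right n hj

def pathJoinLabel (n m : ℕ) : Fin n ⊕ Fin m → ℕ :=
  Sum.elim (fun i => pathLabel n i) (fun j => joinLabel n j)

section pathJoinLabel

variable {n m : ℕ}

lemma pathLabel_mem_Icc (i : Fin n) : pathLabel n i ∈ Set.Icc (n / 2 + 1) (n / 2 + n) :=
  (pathLabel_bijOn n).mapsTo i.2

lemma pathJoinLabel_injective (hn : 2 ≤ n) : Function.Injective (pathJoinLabel n m) := by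
  have hmono : StrictMono (joinLabel n) := fun j j' hj => by
    have := joinLabel_add_le_of_lt (n := n) (by omega) hj
    omega
  refine Function.Injective.sumElim (fun i i' h => Fin.ext ((pathLabel_bijOn n).injOn i.2 i'.2 h))
    (fun j j' h => Fin.ext (hmono.injective h)) (fun i j h => ?_)
  have := pathLabel_mem_Icc i
  rcases joinLabel_eq_one_or_le n j with h1 | h1 <;> simp only [Set.mem_Icc] at this <;> omega

lemma pathJoinLabel_mem_Icc (hn : 0 < n) (hm : 2 ≤ m) (v : Fin n ⊕ Fin m) :
    pathJoinLabel n m v ∈ Set.Icc 1 (n * m) := by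
  have h2n : 2 * n ≤ m * n := Nat.mul_le_mul_right n hm
  rw [Nat.mul_comm]
  rcases v with i | j
  · have := pathLabel_mem_Icc i
    simp only [pathJoinLabel, Sum.elim_inl, Set.mem_Icc] at this ⊢
    omega
  · have := joinLabel_le hn j.2
    rcases joinLabel_eq_one_or_le n j with h1 | h1 <;>
      simp only [pathJoinLabel, Sum.elim_inr, Set.mem_Icc] <;> omega

lemma edgeSum_pathJoinLabel_path {i i' : Fin n} (hi : (i' : ℕ) = i + 1) :
    edgeSum (pathJoinLabel n m) s(Sum.inl i, Sum.inl i') = n / 2 + n + 2 + i := by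
  simp only [edgeSum_mk, pathJoinLabel, Sum.elim_inl, hi]
  exact pathLabel_add_pathLabel_succ (hi ▸ i'.2)

lemma mapsTo_edgeSum_pathJoinLabel (hn : 0 < n) (hm : 0 < m) :
    Set.MapsTo (edgeSum (pathJoinLabel n m)) (pathJoin n m).edgeSet
      (Set.Ico (n / 2 + 2) (n / 2 + 1 + (m + 1) * n)) := by
  have hmn : n ≤ m * n := Nat.le_mul_of_pos_left n hm
  have hsucc := add_one_mul m n
  rintro e he
  rcases mem_edgeSet_pathJoin.mp he with ⟨i, i', hi, rfl⟩ | ⟨i, j, rfl⟩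
  · rw [edgeSum_pathJoinLabel_path hi, Set.mem_Ico]
    omega
  · have hi := pathLabel_mem_Icc i
    have hj := joinLabel_le hn j.2
    have hj' := joinLabel_eq_one_or_le n j
    simp only [edgeSum_mk, pathJoinLabel, Sum.elim_inl, Sum.elim_inr, Set.mem_Icc,
      Set.mem_Ico] at hi ⊢
    omega

lemma eq_of_pathLabel_add_joinLabel_eq (hn : 0 < n) {i k : Fin n} {j l : ℕ}
    (h : pathLabel n i + joinLabel n j = pathLabel n k + joinLabel n l) : i = k ∧ j = l := by
  have hi := pathLabel_mem_Icc i
  have hk := pathLabel_mem_Icc k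
  simp only [Set.mem_Icc] at hi hk
  obtain rfl : j = l := by
    rcases lt_trichotomy j l with hlt | heq | hgt
    · have := joinLabel_add_le_of_lt hn hlt; omega
    · exact heq
    · have := joinLabel_add_le_of_lt hn hgt; omega
  exact ⟨Fin.ext ((pathLabel_bijOn n).injOn i.2 k.2 (by omega)), rfl⟩

lemma injOn_edgeSum_pathJoinLabel (hn : 0 < n) :
    Set.InjOn (edgeSum (pathJoinLabel n m)) (pathJoin n m).edgeSet := by
  have joinSum_lt_or_lt (i : Fin n) (j : Fin m) :
      pathLabel n i + joinLabel n j ≤ n / 2 + n + 1 ∨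
        n / 2 + 1 + 2 * n ≤ pathLabel n i + joinLabel n j := by
    have := pathLabel_mem_Icc i
    rcases joinLabel_eq_one_or_le n j with h1 | h1 <;> simp only [Set.mem_Icc] at this <;> omega
  intro e he e' he' hee'
  rcases mem_edgeSet_pathJoin.mp he with ⟨i, i', hi, rfl⟩ | ⟨i, j, rfl⟩ <;>
    rcases mem_edgeSet_pathJoin.mp he' with ⟨k, k', hk, rfl⟩ | ⟨k, l, rfl⟩
  · rw [edgeSum_pathJoinLabel_path hi, edgeSum_pathJoinLabel_path hk] at hee'
    obtain rfl : i = k := Fin.ext (by omega)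
    obtain rfl : i' = k' := Fin.ext (by omega)
    rfl
  · rw [edgeSum_pathJoinLabel_path hi] at hee'
    have := joinSum_lt_or_lt k l
    have : (i : ℕ) + 1 < n := hi ▸ i'.2
    simp only [edgeSum_mk, pathJoinLabel, Sum.elim_inl, Sum.elim_inr] at hee'
    omega
  · rw [edgeSum_pathJoinLabel_path hk] at hee'
    have := joinSum_lt_or_lt i j
    have : (k : ℕ) + 1 < n := hk ▸ k'.2
    simp only [edgeSum_mk, pathJoinLabel, Sum.elim_inl, Sum.elim_inr] at hee'
    omega
  · simp only [edgeSum_mk, pathJoinLabel, Sum.elim_inl, Sum.elim_inr] at hee'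
    obtain ⟨rfl, hjl⟩ := eq_of_pathLabel_add_joinLabel_eq hn hee'
    rw [Fin.ext hjl]

lemma surjOn_edgeSum_pathJoinLabel (hn : 0 < n) (hm : 0 < m) :
    Set.SurjOn (edgeSum (pathJoinLabel n m)) (pathJoin n m).edgeSet
      (Set.Ico (n / 2 + 2) (n / 2 + 1 + (m + 1) * n)) := by
  have joinEdge (x w : ℕ) (j : Fin m) (hw : w ∈ Set.Icc (n / 2 + 1) (n / 2 + n))
      (hx : x = w + joinLabel n j) :
      x ∈ edgeSum (pathJoinLabel n m) '' (pathJoin n m).edgeSet := by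
    obtain ⟨i, hi, rfl⟩ := (pathLabel_bijOn n).surjOn hw
    exact ⟨_, mem_edgeSet_pathJoin.mpr (Or.inr ⟨⟨i, hi⟩, j, rfl⟩), hx.symm⟩
  intro x hx
  simp only [Set.mem_Ico] at hx
  by_cases h₁ : x ≤ n / 2 + n + 1
  · exact joinEdge x (x - 1) ⟨0, hm⟩ (by simp only [Set.mem_Icc]; omega)
      (by simp only [joinLabel, if_pos]; omega)
  by_cases h₂ : x ≤ n / 2 + 2 * n
  · refine ⟨s(Sum.inl ⟨x - (n / 2 + n + 2), by omega⟩,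
      Sum.inl ⟨x - (n / 2 + n + 1), by omega⟩),
      mem_edgeSet_pathJoin.mpr (Or.inl ⟨_, _, by simp only; omega, rfl⟩), ?_⟩
    rw [edgeSum_pathJoinLabel_path (by simp only; omega)]
    simp only
    omega
  -- the remaining sums are `(⌊n/2⌋ + 1 + d % n) + (d / n) * n` with `d / n ≥ 2`
  set d := x - (n / 2 + 1)
  have hq₂ : 2 ≤ d / n := (Nat.le_div_iff_mul_le hn).mpr (by omega)
  have hqm : d / n < m + 1 := (Nat.div_lt_iff_lt_mul hn).mpr (by omega)
  have hdiv : d % n + n * (d / n) = d := Nat.mod_add_div d n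
  have hmod : d % n < n := Nat.mod_lt d hn
  refine joinEdge x (n / 2 + 1 + d % n) ⟨d / n - 1, by omega⟩
    (by simp only [Set.mem_Icc]; omega) ?_
  simp only [joinLabel, if_neg (show d / n - 1 ≠ 0 by omega),
    Nat.sub_add_cancel (by omega : 1 ≤ d / n), Nat.mul_comm (d / n)]
  omega

lemma bijOn_edgeSum_pathJoinLabel (hn : 0 < n) (hm : 0 < m) :
    Set.BijOn (edgeSum (pathJoinLabel n m)) (pathJoin n m).edgeSet
      (Set.Ico (n / 2 + 2) (n / 2 + 1 + (m + 1) * n)) :=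
  ⟨mapsTo_edgeSum_pathJoinLabel hn hm, injOn_edgeSum_pathJoinLabel hn,
    surjOn_edgeSum_pathJoinLabel hn hm⟩

end pathJoinLabel

/-- for `n, m ≥ 3`, `μₛ(P_n + K̄_m) ≤ (n−1)(m−1) − 1`. -/
theorem stmt9 (n m : ℕ) (hn : 3 ≤ n) (hm : 3 ≤ m) :
    semDeficiency (pathJoin n m) ≤ (((n - 1) * (m - 1) - 1 : ℕ) : ℕ∞) := by
  have hdef : (n - 1) * (m - 1) - 1 = n * m - Fintype.card (Fin n ⊕ Fin m) := by
    obtain ⟨a, rfl⟩ : ∃ a, n = a + 1 := ⟨n - 1, by omega⟩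
    obtain ⟨b, rfl⟩ : ∃ b, m = b + 1 := ⟨m - 1, by omega⟩
    simp only [Fintype.card_sum, Fintype.card_fin, Nat.add_sub_cancel, add_mul, mul_add]
    omega
  rw [hdef]
  exact semDeficiency_le (isSEM_unionIsolated_of_bijOn_edgeSum
    (pathJoinLabel_injective (by omega)) (pathJoinLabel_mem_Icc (by omega) (by omega))
    (bijOn_edgeSum_pathJoinLabel (by omega) (by omega)))
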